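/- Let q ≥ 1, d ≥ 1, and Δ̃ ∈ (0,1). Let B = B_q^d(1) be the closed unit ℓq-ball in ℝ^d centered at the origin and B_Δ̃ = B_q^d(Δ̃) the concentric ball of radius Δ̃. Define probability measures μ = Δ̃^d·Dirac_0 + (1−Δ̃^d)·Unif(B ∖ B_Δ̃) and ν = Unif(B), where Dirac_0 is the point mass at the origin and Unif(S) is normalized Lebesgue measure on S. Then: (i) TV(μ, ν) = Δ̃^d; (ii) for every subset U of B open in the subspace topology, μ(U) ≤ ν(U^{Δ̃}), where U^α = {x ∈ B : inf_{u∈U} ‖x−u‖_q ≤ α}; and (iii) for every α ∈ [0, Δ̃) there exists an open U ⊆ B with μ(U) > ν(U^α). (Thus W_∞^{ℓq}(μ,ν) = Δ̃ while TV(μ,ν) = Δ̃^d, showing the TV-to-W_∞ conversion is tight up to a constant.) -/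
import Mathlib


open MeasureTheory
open scoped ENNReal

noncomputable section

/-- The ℓq norm on ℝ^d. -/
def lqNorm {d : ℕ} (q : ℝ) (x : Fin d → ℝ) : ℝ := (∑ i, |x i| ^ q) ^ (1 / q)

/-- The closed ℓq-ball of radius `r` centered at `c` in ℝ^d. -/
def lqBall (d : ℕ) (q : ℝ) (c : Fin d → ℝ) (r : ℝ) : Set (Fin d → ℝ) :=
  {x | lqNorm q (x - c) ≤ r}

/-- The uniform distribution (normalized Lebesgue measure) on a set Θ ⊆ ℝ^d. -/
def unifOn {d : ℕ} (Θ : Set (Fin d → ℝ)) : Measure (Fin d → ℝ) :=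
  (volume Θ)⁻¹ • volume.restrict Θ

/-- The total variation distance between two measures. -/
def tvDist {α : Type*} [MeasurableSpace α] (μ ν : Measure α) : ℝ :=
  ⨆ S : {S : Set α // MeasurableSet S}, |(μ S.1).toReal - (ν S.1).toReal|

/-- The `α`-expansion of `U` inside `Θ` in ℓq distance:
`U^α = {x ∈ Θ : inf_{u ∈ U} ‖x - u‖_q ≤ α}`. -/
def expand {d : ℕ} (q : ℝ) (Θ U : Set (Fin d → ℝ)) (α : ℝ) : Set (Fin d → ℝ) :=
  {x ∈ Θ | sInf {t : ℝ | ∃ u ∈ U, t = lqNorm q (x - u)} ≤ α}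

open scoped Pointwise

section helpers
variable {d : ℕ} {q : ℝ}

lemma lqNorm_nonneg (q : ℝ) (x : Fin d → ℝ) : 0 ≤ lqNorm q x :=
  Real.rpow_nonneg (Finset.sum_nonneg fun i _ => Real.rpow_nonneg (abs_nonneg _) _) _

lemma lqNorm_zero (hq : 1 ≤ q) : lqNorm q (0 : Fin d → ℝ) = 0 := by
  have hq0 : q ≠ 0 := by positivity
  simp [lqNorm, Real.zero_rpow hq0, Real.zero_rpow (inv_ne_zero hq0)]

lemma lqNorm_triangle (hq : 1 ≤ q) (x y : Fin d → ℝ) :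
    lqNorm q (x + y) ≤ lqNorm q x + lqNorm q y := by
  simpa [lqNorm] using Real.Lp_add_le Finset.univ x y hq

lemma lqNorm_coord (hq : 1 ≤ q) (x : Fin d → ℝ) (i : Fin d) : |x i| ≤ lqNorm q x := by
  have hq0 : 0 < q := lt_of_lt_of_le one_pos hq
  have h1 : |x i| ^ q ≤ ∑ j, |x j| ^ q :=
    Finset.single_le_sum (fun j _ => Real.rpow_nonneg (abs_nonneg _) _) (Finset.mem_univ i)
  have h2 : (|x i| ^ q) ^ (1/q) ≤ lqNorm q x :=
    Real.rpow_le_rpow (Real.rpow_nonneg (abs_nonneg _) _) h1 (by positivity)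
  calc |x i| = (|x i| ^ q) ^ (1/q) := by
        rw [← Real.rpow_mul (abs_nonneg _), mul_one_div_cancel hq0.ne', Real.rpow_one]
    _ ≤ lqNorm q x := h2

lemma lqNorm_le (hq : 1 ≤ q) {x : Fin d → ℝ} {s : ℝ} (hs : 0 ≤ s) (h : ∀ i, |x i| ≤ s) :
    lqNorm q x ≤ (d : ℝ) ^ (1/q) * s := by
  have hq0 : 0 < q := lt_of_lt_of_le one_pos hq
  have h1 : ∑ i, |x i| ^ q ≤ (d : ℝ) * s ^ q := by
    calc ∑ i, |x i| ^ q ≤ ∑ _i : Fin d, s ^ q :=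
          Finset.sum_le_sum fun i _ => Real.rpow_le_rpow (abs_nonneg _) (h i) hq0.le
      _ = (d : ℝ) * s ^ q := by simp [mul_comm]
  calc lqNorm q x ≤ ((d : ℝ) * s ^ q) ^ (1/q) :=
        Real.rpow_le_rpow (Finset.sum_nonneg fun i _ => Real.rpow_nonneg (abs_nonneg _) _) h1
          (by positivity)
    _ = (d : ℝ) ^ (1/q) * s := by
        rw [Real.mul_rpow (by positivity) (by positivity),
          ← Real.rpow_mul hs, mul_one_div_cancel hq0.ne', Real.rpow_one]

lemma lqNorm_smul (hq : 1 ≤ q) (c : ℝ) (x : Fin d → ℝ) :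
    lqNorm q (c • x) = |c| * lqNorm q x := by
  have hq0 : 0 < q := lt_of_lt_of_le one_pos hq
  have h1 : ∀ i, |c * x i| ^ q = |c| ^ q * |x i| ^ q := by
    intro i
    rw [abs_mul, Real.mul_rpow (abs_nonneg _) (abs_nonneg _)]
  simp only [lqNorm, Pi.smul_apply, smul_eq_mul, h1, ← Finset.mul_sum]
  rw [Real.mul_rpow (by positivity) (Finset.sum_nonneg fun i _ => Real.rpow_nonneg (abs_nonneg _) _),
    ← Real.rpow_mul (abs_nonneg _), mul_one_div_cancel hq0.ne', Real.rpow_one]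

lemma continuous_lqNorm (hq : 1 ≤ q) : Continuous (lqNorm q (d := d)) := by
  have hq0 : (0:ℝ) ≤ q := le_trans zero_le_one hq
  have h1 : Continuous fun x : Fin d → ℝ => ∑ i, |x i| ^ q := by
    apply continuous_finset_sum
    intro i _
    exact (Real.continuous_rpow_const hq0).comp ((continuous_apply i).abs)
  exact (Real.continuous_rpow_const (by positivity)).comp h1

lemma lqBall_zero_eq (r : ℝ) : lqBall d q 0 r = {x | lqNorm q x ≤ r} := by
  ext x; simp [lqBall]

lemma isClosed_lqBall (hq : 1 ≤ q) (r : ℝ) : IsClosed (lqBall d q 0 r) := by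
  rw [lqBall_zero_eq]
  exact isClosed_le (continuous_lqNorm hq) continuous_const

lemma measurableSet_lqBall (hq : 1 ≤ q) (r : ℝ) : MeasurableSet (lqBall d q 0 r) :=
  (isClosed_lqBall hq r).measurableSet

lemma lqBall_mono (hq : 1 ≤ q) {r₁ r₂ : ℝ} (h : r₁ ≤ r₂) :
    lqBall d q 0 r₁ ⊆ lqBall d q 0 r₂ := by
  rw [lqBall_zero_eq, lqBall_zero_eq]
  exact fun x hx => le_trans hx h

lemma zero_mem_lqBall (hq : 1 ≤ q) {r : ℝ} (hr : 0 ≤ r) : (0 : Fin d → ℝ) ∈ lqBall d q 0 r := by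
  rw [lqBall_zero_eq]; simpa [lqNorm_zero hq] using hr

lemma volume_lqBall_smul (hq : 1 ≤ q) {r : ℝ} (hr : 0 < r) :
    volume (lqBall d q 0 r) = ENNReal.ofReal (r ^ d) * volume (lqBall d q 0 1) := by
  have hset : lqBall d q 0 r = r • lqBall d q 0 1 := by
    ext x
    rw [Set.mem_smul_set_iff_inv_smul_mem₀ hr.ne', lqBall_zero_eq, lqBall_zero_eq,
      Set.mem_setOf_eq, Set.mem_setOf_eq, lqNorm_smul hq, abs_inv, abs_of_pos hr,
      inv_mul_le_iff₀ hr, mul_one]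
  rw [hset, Measure.addHaar_smul_of_nonneg volume hr.le, Module.finrank_fin_fun]

end helpers

section volbounds
variable {d : ℕ} {q : ℝ}

lemma volume_lqBall_one_lt_top (hq : 1 ≤ q) : volume (lqBall d q 0 1) < ⊤ := by
  have hsub : lqBall d q 0 1 ⊆ Set.pi Set.univ fun _ : Fin d => Set.Icc (-1 : ℝ) 1 := by
    intro x hx
    rw [lqBall_zero_eq] at hx
    intro i _
    exact Set.mem_Icc.2 (abs_le.1 (le_trans (lqNorm_coord hq x i) hx))
  calc volume (lqBall d q 0 1)
      ≤ volume (Set.pi Set.univ fun _ : Fin d => Set.Icc (-1:ℝ) 1) := measure_mono hsub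
    _ = ∏ _i : Fin d, volume (Set.Icc (-1:ℝ) 1) := volume_pi_pi _
    _ < ⊤ := ENNReal.prod_lt_top (fun i _ => by simp [Real.volume_Icc])

lemma volume_lqBall_one_pos (hd : 1 ≤ d) (hq : 1 ≤ q) : 0 < volume (lqBall d q 0 1) := by
  have hq0 : 0 < q := lt_of_lt_of_le one_pos hq
  have hdpos : (0:ℝ) < d := by exact_mod_cast Nat.lt_of_lt_of_le Nat.zero_lt_one hd
  set s : ℝ := ((d:ℝ) ^ (1/q))⁻¹ with hs
  have hspos : 0 < s := by positivity
  have hsub : (Set.pi Set.univ fun _ : Fin d => Set.Icc (-s) s) ⊆ lqBall d q 0 1 := by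
    intro x hx
    rw [lqBall_zero_eq]
    have h := lqNorm_le hq hspos.le (fun i => abs_le.2 (Set.mem_Icc.1 (hx i (Set.mem_univ i))))
    calc lqNorm q x ≤ (d:ℝ)^(1/q) * s := h
      _ = 1 := mul_inv_cancel₀ (by positivity)
  refine lt_of_lt_of_le ?_ (measure_mono hsub)
  rw [volume_pi_pi]
  simp only [Real.volume_Icc, Finset.prod_const, Finset.card_univ, Fintype.card_fin]
  have h2s : (0:ℝ≥0∞) < ENNReal.ofReal (s - -s) := ENNReal.ofReal_pos.2 (by linarith)
  exact ENNReal.pow_pos h2s d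

lemma volume_singleton_zero (hd : 1 ≤ d) : volume ({0} : Set (Fin d → ℝ)) = 0 := by
  have h : ({(0 : Fin d → ℝ)} : Set (Fin d → ℝ)) = Set.pi Set.univ fun _ => ({0} : Set ℝ) := by
    ext x; simp [funext_iff]
  rw [h, volume_pi_pi]
  simp only [Real.volume_singleton, Finset.prod_const, Finset.card_univ, Fintype.card_fin]
  exact zero_pow (by omega)

end volbounds

/-- **Tightness of the TV-to-W∞ conversion (Example 1 of the paper).**
With `μ = Δ̃^d·Dirac₀ + (1-Δ̃^d)·Unif(B∖B_Δ̃)` and `ν = Unif(B)` on the unit ℓq-ball `B`: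
(i) `TV(μ,ν) = Δ̃^d`; (ii) `μ(U) ≤ ν(U^Δ̃)` for every relatively open `U ⊆ B`;
(iii) for every `α ∈ [0,Δ̃)` some relatively open `U` violates `μ(U) ≤ ν(U^α)`;
hence `W_∞^{ℓq}(μ,ν) = Δ̃`. -/
theorem tightness_of_tv_winfty_conversion
    (d : ℕ) (hd : 1 ≤ d) (q : ℝ) (hq : 1 ≤ q)
    (Δ : ℝ) (hΔ : Δ ∈ Set.Ioo (0 : ℝ) 1)
    (B : Set (Fin d → ℝ)) (hB : B = lqBall d q 0 1)
    (μ ν : Measure (Fin d → ℝ))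
    (hμ : μ = ENNReal.ofReal (Δ ^ d) • Measure.dirac (0 : Fin d → ℝ)
        + ENNReal.ofReal (1 - Δ ^ d) • unifOn (B \ lqBall d q 0 Δ))
    (hν : ν = unifOn B) :
    tvDist μ ν = Δ ^ d
    ∧ (∀ U : Set (Fin d → ℝ), (∃ V, IsOpen V ∧ U = V ∩ B) →
        μ U ≤ ν (expand q B U Δ))
    ∧ (∀ α : ℝ, 0 ≤ α → α < Δ →
        ∃ U : Set (Fin d → ℝ), (∃ V, IsOpen V ∧ U = V ∩ B)
          ∧ ν (expand q B U α) < μ U) := by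
  classical
  obtain ⟨hΔ0, hΔ1⟩ := hΔ
  have hq0 : 0 < q := lt_of_lt_of_le one_pos hq
  have hd0 : d ≠ 0 := by omega
  set K : Set (Fin d → ℝ) := lqBall d q 0 Δ with hKdef
  set A : Set (Fin d → ℝ) := B \ K with hAdef
  have hBmeas : MeasurableSet B := hB ▸ (measurableSet_lqBall hq 1)
  have hKmeas : MeasurableSet K := measurableSet_lqBall hq Δ
  have hAmeas : MeasurableSet A := hBmeas.diff hKmeas
  have hKB : K ⊆ B := by rw [hB]; exact lqBall_mono hq hΔ1.le
  have hΔd1 : Δ ^ d < 1 := pow_lt_one₀ hΔ0.le hΔ1 hd0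
  have hΔd0 : 0 < Δ ^ d := pow_pos hΔ0 d
  have hvolB_pos : 0 < volume B := hB ▸ volume_lqBall_one_pos hd hq
  have hvolB_ne : volume B ≠ 0 := hvolB_pos.ne'
  have hvolB_top : volume B ≠ ⊤ := (hB ▸ volume_lqBall_one_lt_top hq).ne
  set c : ℝ≥0∞ := (volume B)⁻¹ with hcdef
  have hcB : c * volume B = 1 := ENNReal.inv_mul_cancel hvolB_ne hvolB_top
  have hvolK : volume K = ENNReal.ofReal (Δ ^ d) * volume B := by
    rw [hKdef, hB]; exact volume_lqBall_smul hq hΔ0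
  have hvolK_top : volume K ≠ ⊤ := (lt_of_le_of_lt (measure_mono hKB)
    (lt_top_iff_ne_top.2 hvolB_top)).ne
  have hvolA : volume A = ENNReal.ofReal (1 - Δ ^ d) * volume B := by
    rw [hAdef, measure_diff hKB hKmeas.nullMeasurableSet hvolK_top, hvolK,
      ENNReal.ofReal_sub _ hΔd0.le, ENNReal.ofReal_one, ENNReal.sub_mul (fun _ _ => hvolB_top),
      one_mul]
  have hofR_ne : ENNReal.ofReal (1 - Δ ^ d) ≠ 0 := by
    simp only [ne_eq, ENNReal.ofReal_eq_zero, not_le]; linarith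
  have coeff : ENNReal.ofReal (1 - Δ ^ d) * (volume A)⁻¹ = c := by
    rw [hvolA, ENNReal.mul_inv (Or.inl hofR_ne) (Or.inl ENNReal.ofReal_ne_top), ← mul_assoc,
      ENNReal.mul_inv_cancel hofR_ne ENNReal.ofReal_ne_top, one_mul]
  have hν_apply : ∀ S : Set (Fin d → ℝ), ν S = c * volume (S ∩ B) := by
    intro S
    rw [hν]
    simp only [unifOn, Measure.smul_apply, smul_eq_mul, Measure.restrict_apply' hBmeas, hcdef]
  have hμ_apply : ∀ S : Set (Fin d → ℝ), MeasurableSet S →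
      μ S = (if (0 : Fin d → ℝ) ∈ S then ENNReal.ofReal (Δ ^ d) else 0)
          + c * volume (S ∩ A) := by
    intro S hS
    rw [hμ]
    simp only [Measure.add_apply, Measure.smul_apply, smul_eq_mul,
      Measure.dirac_apply' _ hS, unifOn, Measure.restrict_apply' hAmeas, ← hAdef]
    rw [← mul_assoc, coeff]
    congr 1
    rw [Set.indicator_apply]
    split <;> simp
  -- splitting of volumes
  have hsplit : ∀ S : Set (Fin d → ℝ), MeasurableSet S →
      volume (S ∩ B) = volume (S ∩ A) + volume (S ∩ K) := by
    intro S hS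
    have hUnion : S ∩ B = (S ∩ A) ∪ (S ∩ K) := by
      rw [hAdef]; ext x
      simp only [Set.mem_inter_iff, Set.mem_union, Set.mem_diff]
      constructor
      · rintro ⟨hxS, hxB⟩
        by_cases hxK : x ∈ K
        · exact Or.inr ⟨hxS, hxK⟩
        · exact Or.inl ⟨hxS, hxB, hxK⟩
      · rintro (⟨hxS, hxB, _⟩ | ⟨hxS, hxK⟩)
        · exact ⟨hxS, hxB⟩
        · exact ⟨hxS, hKB hxK⟩
    rw [hUnion, measure_union (Set.disjoint_sdiff_left.mono
      Set.inter_subset_right Set.inter_subset_right) (hS.inter hKmeas)]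
  have hle1 : ∀ T : Set (Fin d → ℝ), T ⊆ B → c * volume T ≤ 1 := by
    intro T hT
    calc c * volume T ≤ c * volume B := mul_le_mul_right (measure_mono hT) c
      _ = 1 := hcB
  have hfin : ∀ T : Set (Fin d → ℝ), T ⊆ B → c * volume T ≠ ⊤ := fun T hT =>
    (lt_of_le_of_lt (hle1 T hT) ENNReal.one_lt_top).ne
  have hcK : c * volume K = ENNReal.ofReal (Δ ^ d) := by
    rw [hvolK, ← mul_assoc, mul_comm c, mul_assoc, hcB, mul_one]
  -- the key real bound for TV
  have hkbound : ∀ S : Set (Fin d → ℝ),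
      (c * volume (S ∩ K)).toReal ≤ Δ ^ d := by
    intro S
    have h1 : c * volume (S ∩ K) ≤ ENNReal.ofReal (Δ ^ d) := by
      rw [← hcK]
      exact mul_le_mul_right (measure_mono Set.inter_subset_right) c
    calc (c * volume (S ∩ K)).toReal ≤ (ENNReal.ofReal (Δ ^ d)).toReal :=
          ENNReal.toReal_mono ENNReal.ofReal_ne_top h1
      _ = Δ ^ d := ENNReal.toReal_ofReal hΔd0.le
  have hbound : ∀ S : {S : Set (Fin d → ℝ) // MeasurableSet S},
      |(μ S.1).toReal - (ν S.1).toReal| ≤ Δ ^ d := by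
    rintro ⟨S, hS⟩
    have hfinA : c * volume (S ∩ A) ≠ ⊤ :=
      hfin _ (Set.inter_subset_right.trans Set.diff_subset)
    have hfinK : c * volume (S ∩ K) ≠ ⊤ := hfin _ (Set.inter_subset_right.trans hKB)
    have hμS : (μ S).toReal
        = (if (0 : Fin d → ℝ) ∈ S then Δ ^ d else 0) + (c * volume (S ∩ A)).toReal := by
      rw [hμ_apply S hS, ENNReal.toReal_add (by split <;> simp [ENNReal.ofReal_ne_top]) hfinA]
      congr 1
      split <;> simp [ENNReal.toReal_ofReal hΔd0.le]
    have hνS : (ν S).toReal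
        = (c * volume (S ∩ A)).toReal + (c * volume (S ∩ K)).toReal := by
      rw [hν_apply S, hsplit S hS, mul_add, ENNReal.toReal_add hfinA hfinK]
    have h1 := hkbound S
    have h2 : (0:ℝ) ≤ (c * volume (S ∩ K)).toReal := ENNReal.toReal_nonneg
    rw [hμS, hνS, abs_le]
    constructor <;> split <;> linarith
  refine ⟨?_, ?_, ?_⟩
  · -- (i)
    have hne : Nonempty {S : Set (Fin d → ℝ) // MeasurableSet S} :=
      ⟨⟨∅, MeasurableSet.empty⟩⟩
    apply le_antisymm (ciSup_le hbound)
    have h0A : ({0} : Set (Fin d → ℝ)) ∩ A = ∅ := by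
      ext x
      simp only [Set.mem_inter_iff, Set.mem_singleton_iff, Set.mem_empty_iff_false, iff_false,
        not_and]
      rintro rfl
      rw [hAdef]
      intro hx
      exact hx.2 (zero_mem_lqBall hq hΔ0.le)
    have hval : |(μ ({0} : Set (Fin d → ℝ))).toReal
        - (ν ({0} : Set (Fin d → ℝ))).toReal| = Δ ^ d := by
      have hμ0 : μ ({0} : Set (Fin d → ℝ)) = ENNReal.ofReal (Δ ^ d) := by
        rw [hμ_apply _ (measurableSet_singleton 0), h0A]
        simp
      have hν0 : ν ({0} : Set (Fin d → ℝ)) = 0 := by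
        rw [hν_apply]
        have : volume (({0} : Set (Fin d → ℝ)) ∩ B) = 0 :=
          measure_mono_null Set.inter_subset_left (volume_singleton_zero hd)
        rw [this, mul_zero]
      rw [hμ0, hν0, ENNReal.toReal_ofReal hΔd0.le]
      simp [abs_of_nonneg hΔd0.le]
    calc Δ ^ d = |(μ ({0} : Set (Fin d → ℝ))).toReal
        - (ν ({0} : Set (Fin d → ℝ))).toReal| := hval.symm
      _ ≤ ⨆ S : {S : Set (Fin d → ℝ) // MeasurableSet S},
          |(μ S.1).toReal - (ν S.1).toReal| :=
        le_ciSup ⟨Δ ^ d, by rintro _ ⟨S, rfl⟩; exact hbound S⟩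
          (⟨{0}, measurableSet_singleton 0⟩ : {S : Set (Fin d → ℝ) // MeasurableSet S})
  · -- (ii)
    rintro U ⟨V, hV, hU⟩
    have hUmeas : MeasurableSet U := hU ▸ (hV.measurableSet.inter hBmeas)
    have hUB : U ⊆ B := hU ▸ Set.inter_subset_right
    have hbdd : ∀ x : Fin d → ℝ, BddBelow {t : ℝ | ∃ u ∈ U, t = lqNorm q (x - u)} := by
      intro x
      exact ⟨0, by rintro t ⟨u, hu, rfl⟩; exact lqNorm_nonneg q _⟩
    have hself : ∀ x ∈ U, x ∈ expand q B U Δ := by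
      intro x hx
      refine ⟨hUB hx, ?_⟩
      have hmem : lqNorm q (x - x) ∈ {t : ℝ | ∃ u ∈ U, t = lqNorm q (x - u)} := ⟨x, hx, rfl⟩
      refine le_trans (csInf_le (hbdd x) hmem) ?_
      simp [lqNorm_zero hq, hΔ0.le]
    by_cases h0 : (0 : Fin d → ℝ) ∈ U
    · have hKsub : K ⊆ expand q B U Δ := by
        intro x hx
        refine ⟨hKB hx, ?_⟩
        have hmem : lqNorm q (x - 0) ∈ {t : ℝ | ∃ u ∈ U, t = lqNorm q (x - u)} := ⟨0, h0, rfl⟩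
        refine le_trans (csInf_le (hbdd x) hmem) ?_
        rw [sub_zero]
        rw [hKdef, lqBall_zero_eq] at hx
        exact hx
      have hsub : K ∪ (U ∩ A) ⊆ expand q B U Δ := by
        rintro x (hx | hx)
        · exact hKsub hx
        · exact hself x hx.1
      have hUsubB : K ∪ (U ∩ A) ⊆ B := Set.union_subset hKB
        (Set.inter_subset_right.trans Set.diff_subset)
      calc μ U = ENNReal.ofReal (Δ ^ d) + c * volume (U ∩ A) := by
            rw [hμ_apply U hUmeas, if_pos h0]
        _ = c * volume K + c * volume (U ∩ A) := by rw [hcK]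
        _ = c * volume (K ∪ (U ∩ A)) := by
            rw [← mul_add, measure_union (Set.disjoint_sdiff_right.mono_right
              Set.inter_subset_right) (hUmeas.inter hAmeas)]
        _ = ν (K ∪ (U ∩ A)) := by
            rw [hν_apply, Set.inter_eq_self_of_subset_left hUsubB]
        _ ≤ ν (expand q B U Δ) := measure_mono hsub
    · rcases Set.eq_empty_or_nonempty U with rfl | hUne
      · rw [hμ_apply ∅ MeasurableSet.empty]
        simp
      calc μ U = c * volume (U ∩ A) := by rw [hμ_apply U hUmeas, if_neg h0, zero_add]
        _ ≤ c * volume (U ∩ B) := mul_le_mul_right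
            (measure_mono (Set.inter_subset_inter_right _ Set.diff_subset)) c
        _ = ν U := (hν_apply U).symm
        _ ≤ ν (expand q B U Δ) := measure_mono (fun x hx => hself x hx)
  · -- (iii)
    intro α hα0 hαΔ
    set ε : ℝ := (Δ - α) / 4 with hεdef
    have hεpos : 0 < ε := by rw [hεdef]; linarith
    set r' : ℝ := α + (Δ - α) / 2 with hr'def
    have hr'pos : 0 < r' := by rw [hr'def]; linarith
    have hr'Δ : r' < Δ := by rw [hr'def]; linarith
    have hr'1 : r' ≤ 1 := le_trans hr'Δ.le hΔ1.le
    set V : Set (Fin d → ℝ) := {x | lqNorm q x < ε} with hVdef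
    have hVopen : IsOpen V := isOpen_lt (continuous_lqNorm hq) continuous_const
    set U : Set (Fin d → ℝ) := V ∩ B with hUdef
    have h0U : (0 : Fin d → ℝ) ∈ U := by
      constructor
      · show lqNorm q (0 : Fin d → ℝ) < ε
        rw [lqNorm_zero hq]; exact hεpos
      · rw [hB]; exact zero_mem_lqBall hq zero_le_one
    have hUmeas : MeasurableSet U := hVopen.measurableSet.inter hBmeas
    have hsub : expand q B U α ⊆ lqBall d q 0 r' := by
      rintro x ⟨hxB, hxinf⟩
      have hne : Set.Nonempty {t : ℝ | ∃ u ∈ U, t = lqNorm q (x - u)} :=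
        ⟨lqNorm q (x - 0), 0, h0U, rfl⟩
      have hlt : sInf {t : ℝ | ∃ u ∈ U, t = lqNorm q (x - u)} < α + ε :=
        lt_of_le_of_lt hxinf (by linarith)
      obtain ⟨t, ⟨u, hu, rfl⟩, ht⟩ := exists_lt_of_csInf_lt hne hlt
      have hu_small : lqNorm q u < ε := hu.1
      have htri : lqNorm q x ≤ lqNorm q (x - u) + lqNorm q u := by
        have h := lqNorm_triangle hq (x - u) u
        rwa [sub_add_cancel] at h
      rw [lqBall_zero_eq]
      show lqNorm q x ≤ r'
      rw [hr'def]
      have : ε + ε ≤ (Δ - α) / 2 := by rw [hεdef]; linarith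
      linarith
    have hballB : lqBall d q 0 r' ⊆ B := by rw [hB]; exact lqBall_mono hq hr'1
    refine ⟨U, ⟨V, hVopen, rfl⟩, ?_⟩
    have hνexp : ν (expand q B U α) ≤ ENNReal.ofReal (r' ^ d) := by
      calc ν (expand q B U α) ≤ ν (lqBall d q 0 r') := measure_mono hsub
        _ = c * volume (lqBall d q 0 r' ∩ B) := hν_apply _
        _ = c * volume (lqBall d q 0 r') := by rw [Set.inter_eq_self_of_subset_left hballB]
        _ = c * (ENNReal.ofReal (r' ^ d) * volume B) := by
            rw [hB, volume_lqBall_smul hq hr'pos]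
        _ = ENNReal.ofReal (r' ^ d) := by
            rw [← mul_assoc, mul_comm c, mul_assoc, hcB, mul_one]
    have hμU : ENNReal.ofReal (Δ ^ d) ≤ μ U := by
      rw [hμ_apply U hUmeas, if_pos h0U]
      exact le_self_add
    have hlt : ENNReal.ofReal (r' ^ d) < ENNReal.ofReal (Δ ^ d) := by
      rw [ENNReal.ofReal_lt_ofReal_iff hΔd0]
      exact pow_lt_pow_left₀ hr'Δ hr'pos.le hd0
    exact lt_of_le_of_lt hνexp (lt_of_lt_of_le hlt hμU)


end
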